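/- arXiv:1707.04083 — 6 statements merged into one kernel-verified Lean document; each statement's English description precedes it below -/
import Mathlib

section
/- For any finite alphabet Σ with |Σ| ≥ 2, the class 𝓛¹_Σ of nonerasing terminal-free pattern languages over Σ is not closed under union: there exist patterns α and β such that L¹_Σ(α) ∪ L¹_Σ(β) ≠ L¹_Σ(γ) for every pattern γ. In particular, this holds for α = x y x and β = x x y (with x, y distinct variables). -/
def patLang (σ : Type) (α : List ℕ) : Set (List σ) :=
  {w | ∃ s : ℕ → List σ, (∀ x, s x ≠ []) ∧ w = α.flatMap s}

lemma len_le {σ : Type} (α : List ℕ) (s : ℕ → List σ) (h : ∀ x, s x ≠ []) :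
    α.length ≤ (α.flatMap s).length := by
  induction α with
  | nil => simp
  | cons a t ih =>
    have : 1 ≤ (s a).length := List.length_pos_iff.mpr (h a)
    simp only [List.flatMap_cons, List.length_append, List.length_cons]
    omega

lemma three {σ : Type} {l1 l2 l3 : List σ} (h1 : l1 ≠ []) (h2 : l2 ≠ []) (h3 : l3 ≠ [])
    {c d e : σ} (h : l1 ++ (l2 ++ (l3 ++ [])) = [c, d, e]) :
    l1 = [c] ∧ l2 = [d] ∧ l3 = [e] := by
  have hlen : l1.length + (l2.length + l3.length) = 3 := by
    have := congrArg List.length h; simpa using this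
  have e1 : l1.length = 1 := by
    have := List.length_pos_iff.mpr h1; have := List.length_pos_iff.mpr h2
    have := List.length_pos_iff.mpr h3; omega
  have e2 : l2.length = 1 := by
    have := List.length_pos_iff.mpr h1; have := List.length_pos_iff.mpr h2
    have := List.length_pos_iff.mpr h3; omega
  have e3 : l3.length = 1 := by
    have := List.length_pos_iff.mpr h1; have := List.length_pos_iff.mpr h2
    have := List.length_pos_iff.mpr h3; omega
  obtain ⟨x, rfl⟩ := List.length_eq_one_iff.mp e1
  obtain ⟨y, rfl⟩ := List.length_eq_one_iff.mp e2
  obtain ⟨z, rfl⟩ := List.length_eq_one_iff.mp e3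
  simp only [List.cons_append, List.nil_append, List.append_nil, List.cons.injEq,
    and_true] at h
  exact ⟨by rw [h.1], by rw [h.2.1], by rw [h.2.2]⟩

/-- over a non-unary alphabet, the class of nonerasing
terminal-free pattern languages is not closed under union; in particular the
union of the languages of `x y x` and `x x y` is not a pattern language. -/
theorem stmt6 {σ : Type} [Fintype σ] (hcard : 2 ≤ Fintype.card σ) :
    ∀ γ : List ℕ, γ ≠ [] →
      patLang σ [0, 1, 0] ∪ patLang σ [0, 0, 1] ≠ patLang σ γ := by
  obtain ⟨a, b, hab⟩ := (Fintype.one_lt_card_iff (α := σ)).mp (by omega)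
  intro γ hγ heq
  -- membership helpers
  have mem_aba : [a, b, a] ∈ patLang σ [0, 1, 0] := by
    refine ⟨fun n => if n = 0 then [a] else [b], fun x => by by_cases h : x = 0 <;> simp [h], ?_⟩
    simp [List.flatMap]
  have mem_aab : [a, a, b] ∈ patLang σ [0, 0, 1] := by
    refine ⟨fun n => if n = 0 then [a] else [b], fun x => by by_cases h : x = 0 <;> simp [h], ?_⟩
    simp [List.flatMap]
  -- γ has length 3
  have hlen3 : γ.length = 3 := by
    have h1 : γ.length ≤ 3 := by
      have : [a, b, a] ∈ patLang σ γ := heq ▸ Or.inl mem_aba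
      obtain ⟨s, hs, hw⟩ := this
      have := len_le γ s hs
      rw [← hw] at this; simpa using this
    have h2 : 3 ≤ γ.length := by
      have hm : γ.flatMap (fun _ => [a]) ∈ patLang σ γ := ⟨_, fun x => by simp, rfl⟩
      rw [← heq] at hm
      have hl : (γ.flatMap (fun _ => [a])).length = γ.length := by
        simp [List.length_flatMap, Function.comp_def]
      rcases hm with ⟨s, hs, hw⟩ | ⟨s, hs, hw⟩
      · have := len_le [0, 1, 0] s hs
        rw [← hw] at this; rw [hl] at this; simpa using this
      · have := len_le [0, 0, 1] s hs
        rw [← hw] at this; rw [hl] at this; simpa using this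
    omega
  obtain ⟨u, v, w, rfl⟩ := List.length_eq_three.mp hlen3
  -- extract letter substitutions
  have get1 : ∃ s : ℕ → List σ, (∀ x, s x ≠ []) ∧ s u = [a] ∧ s v = [b] ∧ s w = [a] := by
    have : [a, b, a] ∈ patLang σ [u, v, w] := heq ▸ Or.inl mem_aba
    obtain ⟨s, hs, hw⟩ := this
    simp only [List.flatMap_cons, List.flatMap_nil] at hw
    obtain ⟨e1, e2, e3⟩ := three (hs u) (hs v) (hs w) hw.symm
    exact ⟨s, hs, e1, e2, e3⟩
  have get2 : ∃ s : ℕ → List σ, (∀ x, s x ≠ []) ∧ s u = [a] ∧ s v = [a] ∧ s w = [b] := by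
    have : [a, a, b] ∈ patLang σ [u, v, w] := heq ▸ Or.inr mem_aab
    obtain ⟨s, hs, hw⟩ := this
    simp only [List.flatMap_cons, List.flatMap_nil] at hw
    obtain ⟨e1, e2, e3⟩ := three (hs u) (hs v) (hs w) hw.symm
    exact ⟨s, hs, e1, e2, e3⟩
  obtain ⟨s1, -, h1u, h1v, h1w⟩ := get1
  obtain ⟨s2, -, h2u, h2v, h2w⟩ := get2
  have huv : u ≠ v := fun h => hab (by
    rw [h, h1v] at h1u; injection h1u with h'; exact h'.symm)
  have hvw : v ≠ w := fun h => hab (by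
    rw [h, h1w] at h1v; simpa using h1v)
  have huw : u ≠ w := fun h => hab (by
    rw [h, h2w] at h2u; injection h2u with h'; exact h'.symm)
  -- [a, b, b] is in patLang γ
  have habb : [a, b, b] ∈ patLang σ [u, v, w] := by
    refine ⟨fun n => if n = u then [a] else [b], fun x => by by_cases h : x = u <;> simp [h], ?_⟩
    simp [List.flatMap, if_neg (Ne.symm huv), if_neg (Ne.symm huw)]
  rw [← heq] at habb
  rcases habb with ⟨s, hs, hw⟩ | ⟨s, hs, hw⟩
  · simp only [List.flatMap_cons, List.flatMap_nil] at hw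
    obtain ⟨e1, e2, e3⟩ := three (hs 0) (hs 1) (hs 0) hw.symm
    exact hab (by rw [e1] at e3; injection e3)
  · simp only [List.flatMap_cons, List.flatMap_nil] at hw
    obtain ⟨e1, e2, e3⟩ := three (hs 0) (hs 0) (hs 1) hw.symm
    exact hab (by rw [e1] at e2; injection e2)
end

section
/- For any finite alphabet Σ with |Σ| ≥ 2, the class 𝓛¹_Σ of nonerasing terminal-free pattern languages over Σ is not closed under intersection: there exist patterns α and β such that L¹_Σ(α) ∩ L¹_Σ(β) ≠ L¹_Σ(γ) for every pattern γ. In particular, this holds for α = x y x and β = x x y (with x, y distinct variables). -/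
lemma length_le_flatMap {σ : Type} (s : ℕ → List σ) (h : ∀ x, s x ≠ []) :
    ∀ γ : List ℕ, γ.length ≤ (γ.flatMap s).length := by
  intro γ
  induction γ with
  | nil => simp
  | cons x t ih =>
      have hx : 0 < (s x).length := List.length_pos_iff.mpr (h x)
      simp only [List.flatMap_cons, List.length_append, List.length_cons]
      omega

lemma cube_of_mem {σ : Type} (w : List σ)
    (h1 : w ∈ patLang σ [0,1,0]) (h2 : w ∈ patLang σ [0,0,1])
    (hlen : w.length = 3) : ∃ c, w = [c, c, c] := by
  obtain ⟨s, hs, rfl⟩ := h1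
  obtain ⟨t, ht, hw⟩ := h2
  simp only [List.flatMap_cons, List.flatMap_nil, List.append_nil] at hw hlen ⊢
  have hs0 : 0 < (s 0).length := List.length_pos_iff.mpr (hs 0)
  have hs1 : 0 < (s 1).length := List.length_pos_iff.mpr (hs 1)
  have ht0 : 0 < (t 0).length := List.length_pos_iff.mpr (ht 0)
  have ht1 : 0 < (t 1).length := List.length_pos_iff.mpr (ht 1)
  have hL : (s 0).length + ((s 1).length + (s 0).length) = 3 := by
    simpa using hlen
  have hL' : (t 0).length + ((t 0).length + (t 1).length) = 3 := by
    have := congrArg List.length hw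
    simp at this
    omega
  have e0 : (s 0).length = 1 := by omega
  have e1 : (s 1).length = 1 := by omega
  have f0 : (t 0).length = 1 := by omega
  have f1 : (t 1).length = 1 := by omega
  obtain ⟨c, hc⟩ := List.length_eq_one_iff.mp e0
  obtain ⟨d, hd⟩ := List.length_eq_one_iff.mp e1
  obtain ⟨e, he⟩ := List.length_eq_one_iff.mp f0
  obtain ⟨f, hf⟩ := List.length_eq_one_iff.mp f1
  rw [hc, hd, he, hf] at hw
  simp at hw
  obtain ⟨h1, h2, h3⟩ := hw
  exact ⟨c, by rw [hc, hd]; simp [h1, h2, h3]⟩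

/-- over a non-unary alphabet, the class of nonerasing
terminal-free pattern languages is not closed under intersection; in
particular the intersection of the languages of `x y x` and `x x y` is not a
pattern language. -/
theorem stmt7 {σ : Type} [Fintype σ] (hcard : 2 ≤ Fintype.card σ) :
    ∀ γ : List ℕ, γ ≠ [] →
      patLang σ [0, 1, 0] ∩ patLang σ [0, 0, 1] ≠ patLang σ γ := by
  obtain ⟨a, b, hab⟩ := Fintype.exists_pair_of_one_lt_card (α := σ) (by omega)
  intro γ hγ heq
  have haaa : ([a,a,a] : List σ) ∈ patLang σ [0,1,0] ∩ patLang σ [0,0,1] := by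
    constructor <;> exact ⟨fun _ => [a], fun _ => by simp, by simp⟩
  -- γ has length 3
  have h3 : γ.length = 3 := by
    have hmem : ([a,a,a] : List σ) ∈ patLang σ γ := heq ▸ haaa
    obtain ⟨s, hs, hw⟩ := hmem
    have hle := length_le_flatMap s hs γ
    rw [← hw] at hle
    simp at hle
    have hmin : (γ.flatMap (fun _ => ([a] : List σ))) ∈ patLang σ γ :=
      ⟨fun _ => [a], fun _ => by simp, rfl⟩
    rw [← heq] at hmin
    obtain ⟨⟨t, ht, hw2⟩, -⟩ := hmin
    have hlen2 : (γ.flatMap (fun _ => ([a] : List σ))).length = γ.length := by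
      simp [Function.comp_def]
    have hge := length_le_flatMap t ht [0,1,0]
    rw [← hw2] at hge
    simp only [List.length_cons, List.length_nil] at hge
    omega
  obtain ⟨p, q, r, rfl⟩ := List.length_eq_three.mp h3
  by_cases hpq : p = q
  · by_cases hqr : q = r
    · -- all equal: L(γ) = cubes, but aabaaab ∈ I has length 7
      subst hpq; subst hqr
      have hwmem : ([a,a,b,a,a,a,b] : List σ) ∈ patLang σ [0,1,0] ∩ patLang σ [0,0,1] := by
        constructor
        · exact ⟨fun x => if x = 0 then [a,a,b] else [a],
            fun x => by dsimp only; split_ifs <;> simp, by simp⟩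
        · exact ⟨fun x => if x = 0 then [a] else [b,a,a,a,b],
            fun x => by dsimp only; split_ifs <;> simp, by simp⟩
      rw [heq] at hwmem
      obtain ⟨s, hs, hw⟩ := hwmem
      have := congrArg List.length hw
      simp at this
      omega
    · -- p = q ≠ r : word [a,a,b] ∈ I, not a cube
      subst hpq
      set t : ℕ → List σ := fun x => if x = r then [b] else [a] with ht
      have hpr : p ≠ r := fun h => hqr h
      have hw' : ([p,p,r].flatMap t) = [a, a, b] := by
        simp [ht, hpr]
      have hmem : ([a,a,b] : List σ) ∈ patLang σ [p,p,r] :=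
        ⟨t, fun x => by simp only [ht]; split_ifs <;> simp, hw'.symm⟩
      rw [← heq] at hmem
      obtain ⟨c, hc⟩ := cube_of_mem _ hmem.1 hmem.2 (by simp)
      simp only [List.cons.injEq, and_true] at hc
      exact hab (hc.1.trans hc.2.2.symm)
  · -- p ≠ q
    have hqp : q ≠ p := fun h => hpq h.symm
    by_cases hrp : r = p
    · subst hrp
      set t : ℕ → List σ := fun x => if x = r then [a] else [b] with ht
      have hw' : ([r,q,r].flatMap t) = [a, b, a] := by
        simp [ht, hqp]
      have hmem : ([a,b,a] : List σ) ∈ patLang σ [r,q,r] :=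
        ⟨t, fun x => by simp only [ht]; split_ifs <;> simp, hw'.symm⟩
      rw [← heq] at hmem
      obtain ⟨c, hc⟩ := cube_of_mem _ hmem.1 hmem.2 (by simp)
      simp only [List.cons.injEq, and_true] at hc
      exact hab (hc.1.trans hc.2.1.symm)
    · set t : ℕ → List σ := fun x => if x = p then [a] else [b] with ht
      have hw' : ([p,q,r].flatMap t) = [a, b, b] := by
        simp [ht, hqp, hrp]
      have hmem : ([a,b,b] : List σ) ∈ patLang σ [p,q,r] :=
        ⟨t, fun x => by simp only [ht]; split_ifs <;> simp, hw'.symm⟩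
      rw [← heq] at hmem
      obtain ⟨c, hc⟩ := cube_of_mem _ hmem.1 hmem.2 (by simp)
      simp only [List.cons.injEq, and_true] at hc
      exact hab (hc.1.trans hc.2.1.symm)
end

section
/- For any finite nonempty alphabet Σ, the class 𝓛¹_Σ of nonerasing terminal-free pattern languages over Σ is not closed under complementation (within Σ⁺, i.e., disregarding the empty word): there exists a pattern α such that Σ⁺ \ L¹_Σ(α) ≠ L¹_Σ(γ) for every pattern γ. In particular, this holds for α = x y (with x, y distinct variables). -/
/-- the class of nonerasing terminal-free pattern languages is
not closed under complementation within `Σ⁺`; in particular the complement of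
the language of `x y` is not a pattern language. -/
theorem stmt9 {σ : Type} [Fintype σ] [Nonempty σ] :
    ∀ γ : List ℕ, γ ≠ [] →
      {w : List σ | w ≠ []} \ patLang σ [0, 1] ≠ patLang σ γ := by
  intro γ hγ h
  obtain ⟨a⟩ := ‹Nonempty σ›
  obtain ⟨x, γ', rfl⟩ := List.exists_cons_of_ne_nil hγ
  -- witness word: substitute [a,a] for every variable
  set w : List σ := (x :: γ').flatMap (fun _ => [a, a]) with hw
  have hmem : w ∈ patLang σ (x :: γ') := ⟨fun _ => [a, a], fun _ => by simp, rfl⟩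
  rw [← h] at hmem
  apply hmem.2
  refine ⟨fun n => if n = 0 then [a] else a :: γ'.flatMap (fun _ => [a, a]), fun n => ?_, ?_⟩
  · by_cases hn : n = 0 <;> simp [hn]
  · simp [hw, List.flatMap]
end

section
/- For any finite alphabet Σ with |Σ| ≥ 2, the class 𝓛¹_Σ of nonerasing terminal-free pattern languages over Σ is not closed under morphisms that map every letter to a word of length two. In particular, for Σ ⊇ {a, b}, the image of the universal pattern language L¹_Σ(x) = Σ⁺ under the morphism h with h(s) = ab for every s ∈ Σ is the language {ab}⁺ = {(ab)^k | k ≥ 1}, and {ab}⁺ ≠ L¹_Σ(γ) for every pattern γ. -/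
def wordPlus {σ : Type} (u : List σ) : Set (List σ) :=
  {w | ∃ k : ℕ, 1 ≤ k ∧ w = (List.replicate k u).flatten}

theorem List.flatMap_const {α β : Type*} (l : List α) (c : List β) :
    l.flatMap (fun _ => c) = (List.replicate l.length c).flatten := by
  rw [List.flatMap_def, List.map_const']

theorem patLang_singleton (σ : Type) (x : ℕ) : patLang σ [x] = {w | w ≠ []} := by
  ext w
  constructor
  · rintro ⟨s, hs, rfl⟩
    simpa using hs x
  · exact fun hw => ⟨fun _ => w, fun _ => hw, by simp⟩

theorem flatMap_const_mem_patLang {σ : Type} (γ : List ℕ) {c : List σ} (hc : c ≠ []) :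
    γ.flatMap (fun _ => c) ∈ patLang σ γ :=
  ⟨fun _ => c, fun _ => hc, rfl⟩

theorem image_flatMap_const_eq_wordPlus {σ : Type} [Nonempty σ] (u : List σ) :
    (fun w : List σ => w.flatMap fun _ => u) '' {w | w ≠ []} = wordPlus u := by
  ext v
  constructor
  · rintro ⟨w, hw, rfl⟩
    exact ⟨w.length, List.length_pos_iff.mpr hw, List.flatMap_const w u⟩
  · rintro ⟨k, hk, rfl⟩
    refine ⟨List.replicate k (Classical.arbitrary σ), ?_, ?_⟩
    · simpa [List.replicate_eq_nil_iff] using Nat.one_le_iff_ne_zero.mp hk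
    · simp [List.flatMap_const]

theorem mem_of_mem_wordPlus {σ : Type} {u w : List σ} {b : σ} (hb : b ∈ u)
    (hw : w ∈ wordPlus u) : b ∈ w := by
  obtain ⟨k, hk, rfl⟩ := hw
  exact List.mem_flatten.mpr ⟨u, List.mem_replicate.mpr ⟨by omega, rfl⟩, hb⟩

theorem wordPlus_ne_patLang {σ : Type} {a b : σ} (hab : a ≠ b) {u : List σ} (hb : b ∈ u)
    (γ : List ℕ) : wordPlus u ≠ patLang σ γ := by
  intro h
  have hunary := flatMap_const_mem_patLang γ (List.cons_ne_nil a [])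
  rw [← h] at hunary
  have hb' := mem_of_mem_wordPlus hb hunary
  rw [List.flatMap_const, List.flatten_replicate_singleton, List.mem_replicate] at hb'
  exact hab hb'.2.symm

theorem stmt11_general {σ : Type} (a b : σ) (hab : a ≠ b) :
    ((fun w : List σ => w.flatMap fun _ => [a, b]) '' patLang σ [0] =
      {w : List σ | ∃ k : ℕ, 1 ≤ k ∧ w = (List.replicate k [a, b]).flatten}) ∧
    (∀ γ : List ℕ, γ ≠ [] →
      {w : List σ | ∃ k : ℕ, 1 ≤ k ∧ w = (List.replicate k [a, b]).flatten} ≠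
        patLang σ γ) := by
  have : Nonempty σ := ⟨a⟩
  refine ⟨?_, fun γ _ => wordPlus_ne_patLang hab (by simp) γ⟩
  rw [patLang_singleton]
  exact image_flatMap_const_eq_wordPlus [a, b]

/-- the class of nonerasing terminal-free pattern languages over
a non-unary alphabet is not closed under morphisms mapping every letter to a
word of length two: the image of `Σ⁺ = L¹_Σ(x)` under the morphism sending
every letter to `ab` is `{ab}⁺`, which is not a pattern language. -/
theorem stmt11 {σ : Type} [Fintype σ] (a b : σ) (hab : a ≠ b) :
    ((fun w : List σ => w.flatMap fun _ => [a, b]) '' patLang σ [0] =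
      {w : List σ | ∃ k : ℕ, 1 ≤ k ∧ w = (List.replicate k [a, b]).flatten}) ∧
    (∀ γ : List ℕ, γ ≠ [] →
      {w : List σ | ∃ k : ℕ, 1 ≤ k ∧ w = (List.replicate k [a, b]).flatten} ≠
        patLang σ γ) :=
  stmt11_general a b hab
end

section
/- For any finite alphabet Σ with at least four letters, the class 𝓛¹_Σ is not closed under inverse letter-to-letter morphisms. In particular, for Σ ⊇ {a, b, c, d} and Γ = {1, 2, 3}, consider the letter-to-letter morphism h : Σ⁺ → Γ⁺ with h(a) = h(b) = 1, h(c) = 2, h(d) = 3 (and arbitrary values on other letters of Σ): then h⁻¹(L¹_Γ(x x)) ≠ L¹_Σ(γ) for every pattern γ, where L¹_Γ(x x) = {w w | w ∈ Γ⁺}. -/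
lemma len_le_flatMap {σ : Type} (s : ℕ → List σ) (hs : ∀ x, s x ≠ []) :
    ∀ γ : List ℕ, γ.length ≤ (γ.flatMap s).length := by
  intro γ
  induction γ with
  | nil => simp
  | cons x xs ih =>
    simp only [List.flatMap_cons, List.length_append, List.length_cons]
    have : 1 ≤ (s x).length := List.length_pos_iff.mpr (hs x)
    omega

lemma not_sq_12 : ¬ (([1, 2] : List (Fin 3)) ∈ patLang (Fin 3) [0, 0]) := by
  rintro ⟨s, hs, hw⟩
  simp only [List.flatMap_cons, List.flatMap_nil, List.append_nil] at hw
  have hlen : (s 0).length = 1 := by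
    have := congrArg List.length hw
    simp at this
    omega
  obtain ⟨e, he⟩ := List.length_eq_one_iff.mp hlen
  rw [he] at hw
  simp at hw
  obtain ⟨h1, h2⟩ := hw
  rw [← h1] at h2
  exact absurd h2 (by decide)

/-- over an alphabet with at least four letters, the class of
nonerasing terminal-free pattern languages is not closed under inverse
letter-to-letter morphisms: for the coding `h` with `h(a) = h(b) = 1`,
`h(c) = 2`, `h(d) = 3`, the preimage of `L¹_Γ(x x) = {ww}` is not a pattern
language. -/
theorem stmt13 {σ : Type} [Fintype σ] (a b c d : σ)
    (hab : a ≠ b) (hac : a ≠ c) (had : a ≠ d)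
    (hbc : b ≠ c) (hbd : b ≠ d) (hcd : c ≠ d)
    (h : σ → Fin 3) (ha : h a = 0) (hb : h b = 0) (hc : h c = 1) (hd : h d = 2) :
    ∀ γ : List ℕ, γ ≠ [] →
      {w : List σ | w ≠ [] ∧ w.map h ∈ patLang (Fin 3) [0, 0]} ≠ patLang σ γ := by
  intro γ hγ heq
  -- [a,a] is in the LHS, hence in patLang σ γ, so γ has length ≤ 2
  have haa : ([a, a] : List σ) ∈ {w : List σ | w ≠ [] ∧ w.map h ∈ patLang (Fin 3) [0, 0]} := by
    refine ⟨by simp, ⟨fun _ => [0], fun _ => by simp, ?_⟩⟩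
    simp [ha]
  rw [heq] at haa
  obtain ⟨s, hs, hsw⟩ := haa
  have hlen : γ.length ≤ 2 := by
    have h2 : (γ.flatMap s).length = 2 := by rw [← hsw]; simp
    have := len_le_flatMap s hs γ
    omega
  -- the map of [c,d] is [1,2]
  have hcdmap : ([c, d] : List σ).map h = [1, 2] := by simp [hc, hd]
  rcases γ with _ | ⟨x, _ | ⟨y, _ | ⟨z, rest⟩⟩⟩
  · exact hγ rfl
  · -- γ = [x] : all nonempty words, but [c,d] ∉ LHS
    have hcd' : ([c, d] : List σ) ∈ patLang σ [x] :=
      ⟨fun _ => [c, d], fun _ => by simp, by simp⟩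
    rw [← heq] at hcd'
    exact not_sq_12 (hcdmap ▸ hcd'.2)
  · by_cases hxy : x = y
    · -- γ = [x,x] : squares, but [a,b] is in LHS and not a square
      subst hxy
      have hab' : ([a, b] : List σ) ∈ {w : List σ | w ≠ [] ∧ w.map h ∈ patLang (Fin 3) [0, 0]} := by
        refine ⟨by simp, ⟨fun _ => [0], fun _ => by simp, ?_⟩⟩
        simp [ha, hb]
      rw [heq] at hab'
      obtain ⟨s', hs', hw⟩ := hab'
      simp only [List.flatMap_cons, List.flatMap_nil, List.append_nil] at hw
      have hlen1 : (s' x).length = 1 := by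
        have := congrArg List.length hw
        simp at this
        omega
      obtain ⟨e, he⟩ := List.length_eq_one_iff.mp hlen1
      rw [he] at hw
      simp at hw
      exact hab (hw.1.trans hw.2.symm)
    · -- γ = [x,y] with x ≠ y : all words of length ≥ 2, but [c,d] ∉ LHS
      have hcd' : ([c, d] : List σ) ∈ patLang σ [x, y] := by
        refine ⟨fun z => if z = x then [c] else [d], fun z => by dsimp only; split <;> simp, ?_⟩
        simp only [List.flatMap_cons, List.flatMap_nil, List.append_nil, if_pos rfl,
          if_neg (fun h' : y = x => hxy h'.symm)]
        simp
      rw [← heq] at hcd'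
      exact not_sq_12 (hcdmap ▸ hcd'.2)
  · simp at hlen
end

section
/- Let Σ be a finite alphabet with |Σ| ≥ 2 and let α = x x be the pattern consisting of two occurrences of the same variable. Then the semigroup closure (L¹_Σ(α))⁺ = {w₁ … w_k | k ≥ 1, each w_i ∈ L¹_Σ(α)} is not a member of 𝓛¹_Σ, i.e., (L¹_Σ(α))⁺ ≠ L¹_Σ(γ) for every pattern γ. -/
/-!
Let `L` be the semigroup closure of the squares and `a ≠ b` two letters. Since `aa ∈ L`, a pattern
`γ` with `L = L(γ)` has at most two letters, as every variable is replaced by a nonempty word.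
A single variable or two distinct variables generate `ab`, which is not in `L` since the only
words of length two in `L` are squares. The remaining pattern `x x` generates only squares,
but `aabb ∈ L` is not a square.
-/

namespace List

theorem eq_of_append_self_eq_append {α : Type*} {t u v : List α} (h : t ++ t = u ++ v)
    (huv : u.length = v.length) : u = v := by
  have htu : t.length = u.length := by
    have := congrArg length h
    simp only [length_append] at this
    omega
  obtain ⟨rfl, rfl⟩ := append_inj h htu
  rfl

end List

namespace patLang

variable {σ : Type}

theorem length_le {α : List ℕ} {w : List σ} (hw : w ∈ patLang σ α) : α.length ≤ w.length := by
  obtain ⟨s, hs, rfl⟩ := hw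
  induction α with
  | nil => simp
  | cons x α ih =>
    simp only [List.flatMap_cons, List.length_append, List.length_cons]
    have := List.length_pos_iff.mpr (hs x)
    omega

theorem mem_singleton {x : ℕ} {w : List σ} (hw : w ≠ []) : w ∈ patLang σ [x] :=
  ⟨fun _ => w, fun _ => hw, by simp⟩

theorem append_mem_pair {x y : ℕ} (hxy : x ≠ y) {u v : List σ} (hu : u ≠ []) (hv : v ≠ []) :
    u ++ v ∈ patLang σ [x, y] := by
  refine ⟨fun z => if z = x then u else v, fun z => ?_, ?_⟩
  · dsimp only
    split_ifs <;> assumption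
  · simp [Ne.symm hxy]

theorem mem_pair_self_iff {x : ℕ} {w : List σ} :
    w ∈ patLang σ [x, x] ↔ ∃ t : List σ, t ≠ [] ∧ w = t ++ t := by
  constructor
  · rintro ⟨s, hs, rfl⟩
    exact ⟨s x, hs x, by simp⟩
  · rintro ⟨t, ht, rfl⟩
    exact ⟨fun _ => t, fun _ => ht, by simp⟩

end patLang

/-- `(L(x x))⁺`, spelled as in `stmt17` so that `change` converts between the two. -/
def squarePlus (σ : Type) : Set (List σ) :=
  {w | ∃ l : List (List σ), l ≠ [] ∧ (∀ u ∈ l, u ∈ patLang σ [0, 0]) ∧ w = l.flatten}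

namespace squarePlus

variable {σ : Type}

theorem square_mem {t : List σ} (ht : t ≠ []) : t ++ t ∈ squarePlus σ :=
  ⟨[t ++ t], by simp, by simpa using patLang.mem_pair_self_iff.mpr ⟨t, ht, rfl⟩, by simp⟩

theorem append_mem {u v : List σ} (hu : u ∈ squarePlus σ) (hv : v ∈ squarePlus σ) :
    u ++ v ∈ squarePlus σ := by
  obtain ⟨l, hl, hsq, rfl⟩ := hu
  obtain ⟨l', -, hsq', rfl⟩ := hv
  refine ⟨l ++ l', by simp [hl], fun w hw => ?_, by simp⟩
  rcases List.mem_append.mp hw with hw | hw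
  exacts [hsq w hw, hsq' w hw]

theorem eq_of_pair_mem {c d : σ} (h : [c, d] ∈ squarePlus σ) : c = d := by
  obtain ⟨_ | ⟨u, l⟩, hl, hsq, hcd⟩ := h
  · exact absurd rfl hl
  obtain ⟨t, ht, rfl⟩ := patLang.mem_pair_self_iff.mp (hsq u List.mem_cons_self)
  have hrest : l.flatten = [] := by
    have := congrArg List.length hcd
    have := List.length_pos_iff.mpr ht
    simp only [List.flatten_cons, List.length_append, List.length_cons, List.length_nil] at *
    exact List.length_eq_zero_iff.mp (by omega)
  simp only [List.flatten_cons, hrest, List.append_nil] at hcd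
  simpa using List.eq_of_append_self_eq_append (u := [c]) (v := [d]) hcd.symm rfl

end squarePlus

/-- over a non-unary alphabet, the semigroup closure of the
pattern language of `x x` is not a pattern language. -/
theorem stmt17 {σ : Type} [Fintype σ] (hcard : 2 ≤ Fintype.card σ) :
    ∀ γ : List ℕ, γ ≠ [] →
      {w : List σ | ∃ l : List (List σ), l ≠ [] ∧
          (∀ u ∈ l, u ∈ patLang σ [0, 0]) ∧ w = l.flatten} ≠
        patLang σ γ := by
  obtain ⟨a, b, hab⟩ := Fintype.one_lt_card_iff.mp hcard
  intro γ hγ hL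
  change squarePlus σ = patLang σ γ at hL
  have haa : [a] ++ [a] ∈ squarePlus σ := squarePlus.square_mem (List.cons_ne_nil a [])
  have hlen : γ.length ≤ 2 := patLang.length_le (hL ▸ haa)
  have hab_notMem : [a] ++ [b] ∉ squarePlus σ := fun h => hab (squarePlus.eq_of_pair_mem h)
  match γ, hγ with
  | [x], _ => exact hab_notMem (hL ▸ patLang.mem_singleton (by simp))
  | [x, y], _ =>
    by_cases hxy : x = y
    · subst hxy
      have haabb : ([a] ++ [a]) ++ ([b] ++ [b]) ∈ patLang σ [x, x] :=
        hL ▸ squarePlus.append_mem haa (squarePlus.square_mem (List.cons_ne_nil b []))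
      obtain ⟨t, -, ht⟩ := patLang.mem_pair_self_iff.mp haabb
      exact hab (by simpa using List.eq_of_append_self_eq_append ht.symm rfl)
    · exact hab_notMem (hL ▸ patLang.append_mem_pair hxy (by simp) (by simp))
  | _ :: _ :: _ :: _, _ => simp at hlen
end
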